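/- arXiv:math/0410447 — 2 statements merged into one kernel-verified Lean document; each statement's English description precedes it below -/
import Mathlib

section
/- Under the reflection R(ξ)(z) = ξ(-z): the symmetric current is antisymmetric, R W_i^s = -W_i^s; the function h_i(ξ) = Σ_z z_i b(z)(ξ(0)-ρ)(ξ(z)-ρ) is symmetric up to translation: R h_i equals h_i plus a finite sum of terms of the form τ_x g - g with g local; consequently, modulo translations, R w_i = -w_i*, where w_i* = W_i^s + h_i is the normalized current of the time-reversed process. -/
open Finset

/-- Sites of the lattice `ℤ^d`. -/
abbrev Site (d : ℕ) := Fin d → ℤ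

/-- Configurations of the exclusion process: `{0,1}^{ℤ^d}`. -/
abbrev Config (d : ℕ) := Site d → Bool

/-- Real-valued occupation indicator. -/
def ind (b : Bool) : ℝ := if b then 1 else 0

/-- `f` is a local function depending only on the coordinates in the finite set `S`. -/
def IsLocal {d : ℕ} (f : Config d → ℝ) (S : Finset (Site d)) : Prop :=
  ∀ ξ η : Config d, (∀ x ∈ S, ξ x = η x) → f ξ = f η

/-- Expectation of a local function (with support in `S`) under the Bernoulli
product measure with parameter `θ`: a finite sum over configurations on `S`. -/
noncomputable def expect {d : ℕ} (θ : ℝ) (S : Finset (Site d)) (f : Config d → ℝ) : ℝ :=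
  ∑ η : {x // x ∈ S} → Bool,
    (∏ x : {x // x ∈ S}, if η x then θ else 1 - θ) *
      f (fun z => if h : z ∈ S then η ⟨z, h⟩ else false)

/-- The configuration `ξ^{x,y}` with the values at `x` and `y` exchanged. -/
def swap {d : ℕ} (x y : Site d) (ξ : Config d) : Config d :=
  fun z => if z = x then ξ y else if z = y then ξ x else ξ z

/-- Spatial shift: `(shift x ξ) z = ξ (x + z)`, so `τ_x g = g ∘ shift x`. -/
def shift {d : ℕ} (x : Site d) (ξ : Config d) : Config d := fun z => ξ (x + z)

/-- Reflection: `(refl ξ) z = ξ (-z)`. -/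
def confRefl {d : ℕ} (ξ : Config d) : Config d := fun z => ξ (-z)

/-- The simple exclusion generator with jump law `p`, truncated to the finite
set `E` of sites (which is assumed large enough in the statements):
`L f (ξ) = Σ_{x,y} p(y-x) ξ(x)(1-ξ(y)) (f(ξ^{x,y}) - f(ξ))`. -/
noncomputable def gen {d : ℕ} (p : Site d → ℝ) (E : Finset (Site d))
    (f : Config d → ℝ) (ξ : Config d) : ℝ :=
  ∑ x ∈ E, ∑ y ∈ E, p (y - x) * ind (ξ x) * (1 - ind (ξ y)) * (f (swap x y ξ) - f ξ)

/-- under the reflection `R`, `R W_i^s = -W_i^s`; `R h_i = h_i` modulo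
a finite sum of translation differences; hence, modulo translations,
`R w_i = -w_i*` with `w_i* = W_i^s + h_i`. -/
theorem stmt11 {d : ℕ} (ρ : ℝ) (hρ : ρ ∈ Set.Ioo (0:ℝ) 1)
    (p : Site d → ℝ) (P : Finset (Site d))
    (hp0 : p 0 = 0) (hpnn : ∀ z, 0 ≤ p z) (hsum : ∑ z ∈ P, p z = 1)
    (hsupp : ∀ z ∉ P, p z = 0)
    (E : Finset (Site d)) (hPE : P ⊆ E) (h0E : (0 : Site d) ∈ E)
    (hEneg : ∀ z ∈ E, -z ∈ E)
    (i : Fin d) (Ws h : Config d → ℝ)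
    (hWs : ∀ ξ, Ws ξ = (1/2) * ∑ z ∈ E,
      ((z i : ℤ) : ℝ) * ((p z + p (-z)) / 2) * (ind (ξ 0) - ind (ξ z)))
    (hh : ∀ ξ, h ξ = ∑ z ∈ E,
      ((z i : ℤ) : ℝ) * ((p z - p (-z)) / 2) * (ind (ξ 0) - ρ) * (ind (ξ z) - ρ)) :
    (∀ ξ : Config d, Ws (confRefl ξ) = - Ws ξ)
    ∧ (∃ (n : ℕ) (x : Fin n → Site d) (g : Fin n → Config d → ℝ)
        (Sg : Fin n → Finset (Site d)),
        (∀ j, IsLocal (g j) (Sg j)) ∧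
        ∀ ξ : Config d, h (confRefl ξ) = h ξ + ∑ j, (g j (shift (x j) ξ) - g j ξ))
    ∧ (∃ (n : ℕ) (x : Fin n → Site d) (g : Fin n → Config d → ℝ)
        (Sg : Fin n → Finset (Site d)),
        (∀ j, IsLocal (g j) (Sg j)) ∧
        ∀ ξ : Config d, Ws (confRefl ξ) - h (confRefl ξ)
          = -(Ws ξ + h ξ) + ∑ j, (g j (shift (x j) ξ) - g j ξ)) := by

  have reidx : ∀ f : Site d → ℝ, ∑ z ∈ E, f z = ∑ z ∈ E, f (-z) := by
    intro f
    refine Finset.sum_equiv (Equiv.neg (Site d)) (fun z => ?_) (fun z _ => by simp)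
    constructor
    · intro hz; exact hEneg z hz
    · intro hz; simpa using hEneg _ hz
  have hWsR : ∀ ξ : Config d, Ws (confRefl ξ) = - Ws ξ := by
    intro ξ
    rw [hWs, hWs]
    have h0 : confRefl ξ 0 = ξ 0 := by simp [confRefl]
    rw [reidx (fun z => ((z i : ℤ) : ℝ) * ((p z + p (-z)) / 2) *
      (ind (confRefl ξ 0) - ind (confRefl ξ z)))]
    rw [neg_mul_eq_mul_neg, ← Finset.sum_neg_distrib]
    congr 1
    apply Finset.sum_congr rfl
    intro z _
    simp only [confRefl, neg_neg, h0, Pi.neg_apply, Int.cast_neg]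
    ring
  have hhR : ∀ ξ : Config d, h (confRefl ξ) = h ξ := by
    intro ξ
    rw [hh, hh]
    rw [reidx (fun z => ((z i : ℤ) : ℝ) * ((p z - p (-z)) / 2) *
      (ind (confRefl ξ 0) - ρ) * (ind (confRefl ξ z) - ρ))]
    apply Finset.sum_congr rfl
    intro z _
    simp only [confRefl, neg_neg, neg_zero, Pi.neg_apply, Int.cast_neg]
    ring
  refine ⟨hWsR, ⟨0, Fin.elim0, Fin.elim0, Fin.elim0, fun j => j.elim0, fun ξ => by
      simp [hhR ξ]⟩,
    ⟨0, Fin.elim0, Fin.elim0, Fin.elim0, fun j => j.elim0, fun ξ => by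
      simp [hhR ξ, hWsR ξ]; ring⟩⟩
end

section
/- For the simple exclusion generator L with jump law p, the generator L* with reversed law p*(x) = p(-x), and any local function g: Σ_x ⟨(ξ(0)-ξ(e_k)) · τ_x(L + L*)g⟩_ρ = 0, i.e. ⟨∇_{e_k}ξ(0), Lg⟩_{ρ,0} = -⟨∇_{e_k}ξ(0), L*g⟩_{ρ,0}, where ⟨f,h⟩_{ρ,0} = Σ_x ⟨f, τ_x h⟩_ρ. -/
open Finset

/-!
`L + L*` is the exclusion generator with the symmetric rates `c z = p z + p (-z)`, and exchanging
the occupations of two sites preserves the Bernoulli product measure, so `L + L*` is self-adjoint: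
`⟨ξ(0) - ξ(e_k), τ_x (L + L*) g⟩ = ⟨(L + L*)(ξ(0) - ξ(e_k)), τ_x g⟩`. A jump from `a` to `b` changes
`ξ(0) - ξ(e_k)` by the constant `1[b = 0] - 1[a = 0] - 1[b = e_k] + 1[a = e_k]`, so after translating
back, the `x`-th term is `Σ_{u,v} c (v - u) ⟨ξ(u)(1 - ξ(v)) g⟩` weighted by these indicators at
`a = x + u`, `b = x + v`. Summed over `x`, each indicator is hit exactly once, and they cancel.
-/

section Expectation

variable {d : ℕ} {θ : ℝ} {S T : Finset (Site d)}

def extendFalse (T : Finset (Site d)) (η : {x // x ∈ T} → Bool) : Config d :=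
  fun z => if h : z ∈ T then η ⟨z, h⟩ else false

theorem expect_eq_sum (f : Config d → ℝ) : expect θ T f =
    ∑ η : {x // x ∈ T} → Bool, (∏ x, if η x then θ else 1 - θ) * f (extendFalse T η) :=
  rfl

theorem expect_sum {ι : Type*} (s : Finset ι) (F : ι → Config d → ℝ) :
    expect θ T (fun ξ => ∑ i ∈ s, F i ξ) = ∑ i ∈ s, expect θ T (F i) := by
  simp only [expect_eq_sum, mul_sum]
  exact sum_comm

theorem expect_const_mul (c : ℝ) (f : Config d → ℝ) :
    expect θ T (fun ξ => c * f ξ) = c * expect θ T f := by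
  simp only [expect_eq_sum, mul_sum, mul_left_comm c]

theorem expect_sub (f g : Config d → ℝ) :
    expect θ T (fun ξ => f ξ - g ξ) = expect θ T f - expect θ T g := by
  simp only [expect_eq_sum, mul_sub, sum_sub_distrib]

theorem expect_eq_of_equiv (σ : {x // x ∈ S} ≃ {x // x ∈ T}) {f g : Config d → ℝ}
    (hfg : ∀ η, f (extendFalse T η) = g (extendFalse S (η ∘ σ))) :
    expect θ T f = expect θ S g :=
  Fintype.sum_equiv (σ.arrowCongr (Equiv.refl Bool)).symm _ _ fun η =>
    congrArg₂ (· * ·) (Equiv.prod_comp σ (fun x => if η x then θ else 1 - θ)).symm (hfg η)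

theorem swap_extendFalse {a b : Site d} (ha : a ∈ T) (hb : b ∈ T) (η : {x // x ∈ T} → Bool) :
    swap a b (extendFalse T η) = extendFalse T (η ∘ Equiv.swap ⟨a, ha⟩ ⟨b, hb⟩) := by
  funext z
  grind [extendFalse, swap]

theorem expect_insert {a : Site d} (ha : a ∉ T) {f : Config d → ℝ} (hf : IsLocal f T) :
    expect θ (insert a T) f = expect θ T f := by
  classical
  let ι := subtypeInsertEquivOption ha
  let σ : (Bool × ({x // x ∈ T} → Bool)) ≃ ({x // x ∈ insert a T} → Bool) :=
    Equiv.piOptionEquivProd.symm.trans (ι.arrowCongr (Equiv.refl Bool)).symm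
  have hweight : ∀ b η, (∏ i, if σ (b, η) i then θ else 1 - θ) =
      (if b then θ else 1 - θ) * ∏ i, if η i then θ else 1 - θ := fun b η => by
    rw [← ι.symm.prod_comp, Fintype.prod_option]
    simp [σ]
  have hlocal : ∀ b η, f (extendFalse (insert a T) (σ (b, η))) = f (extendFalse T η) :=
    fun b η => hf _ _ fun z hz => by
      have hza : z ≠ a := fun h => ha (h ▸ hz)
      simp [extendFalse, hz, σ, ι, subtypeInsertEquivOption, hza]
  rw [expect_eq_sum, expect_eq_sum, ← σ.sum_comp, Fintype.sum_prod_type, Fintype.sum_bool]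
  simp only [hweight, hlocal, mul_assoc, ← mul_sum, if_true, Bool.false_eq_true, if_false]
  ring

theorem IsLocal.mono {f : Config d → ℝ} (hf : IsLocal f S) (hST : S ⊆ T) : IsLocal f T :=
  fun ξ η h => hf ξ η fun x hx => h x (hST hx)

theorem IsLocal.comp_shift {f : Config d → ℝ} (hf : IsLocal f S) (x : Site d) :
    IsLocal (fun ξ => f (shift x ξ)) (S.map (addLeftEmbedding x)) :=
  fun _ _ h => hf _ _ fun z hz => h (x + z) (mem_map_of_mem _ hz)

theorem expect_of_subset (hST : S ⊆ T) {f : Config d → ℝ} (hf : IsLocal f S) :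
    expect θ T f = expect θ S f := by
  classical
  obtain ⟨D, rfl⟩ : ∃ D, T = S ∪ D := ⟨T \ S, (union_sdiff_of_subset hST).symm⟩
  induction D using Finset.induction_on with
  | empty => rw [union_empty]
  | insert a D _ ih =>
    rw [union_insert]
    by_cases h : a ∈ S ∪ D
    · rw [insert_eq_of_mem h, ih subset_union_left]
    · rw [expect_insert h (hf.mono subset_union_left), ih subset_union_left]

theorem expect_comp_shift_map (x : Site d) {f : Config d → ℝ} (hf : IsLocal f S) :
    expect θ (S.map (addLeftEmbedding x)) (fun ξ => f (shift x ξ)) = expect θ S f :=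
  expect_eq_of_equiv (S.equivMap (addLeftEmbedding x)) fun η =>
    hf _ _ fun z hz => by
      have hxz : x + z ∈ S.map (addLeftEmbedding x) := mem_map_of_mem _ hz
      simp only [extendFalse, shift, dif_pos hz, dif_pos hxz]
      rfl

theorem map_addLeftEmbedding_subset {x : Site d} (hST : ∀ y ∈ S, x + y ∈ T) :
    S.map (addLeftEmbedding x) ⊆ T := by
  simpa [subset_iff] using hST

theorem expect_comp_shift {x : Site d} {f : Config d → ℝ} (hf : IsLocal f S)
    (hST : ∀ y ∈ S, x + y ∈ T) : expect θ T (fun ξ => f (shift x ξ)) = expect θ S f := by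
  rw [expect_of_subset (map_addLeftEmbedding_subset hST) (hf.comp_shift x),
    expect_comp_shift_map x hf]

theorem expect_comp_swap {a b : Site d} (ha : a ∈ T) (hb : b ∈ T) (f : Config d → ℝ) :
    expect θ T (fun ξ => f (swap a b ξ)) = expect θ T f :=
  expect_eq_of_equiv (Equiv.swap ⟨a, ha⟩ ⟨b, hb⟩) fun η => by rw [swap_extendFalse ha hb]

end Expectation

section Exchange

variable {d : ℕ}

theorem swap_apply_left (a b : Site d) (ξ : Config d) : swap a b ξ a = ξ b := by
  simp [swap]

theorem swap_apply_right (a b : Site d) (ξ : Config d) : swap a b ξ b = ξ a := by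
  grind [swap]

theorem swap_comm (a b : Site d) : swap (d := d) a b = swap b a := by
  funext ξ z
  grind [swap]

theorem swap_swap (a b : Site d) (ξ : Config d) : swap a b (swap a b ξ) = ξ := by
  funext z
  grind [swap]

theorem swap_shift (x a b : Site d) (ξ : Config d) :
    swap a b (shift x ξ) = shift x (swap (x + a) (x + b) ξ) := by
  funext z
  simp only [swap, shift, add_right_inj]

def jumpCoef (z a b : Site d) : ℝ := (if z = b then 1 else 0) - (if z = a then 1 else 0)

theorem mul_ind_swap_sub (a b z : Site d) (ξ : Config d) :
    ind (ξ a) * (1 - ind (ξ b)) * (ind (swap a b ξ z) - ind (ξ z)) =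
      ind (ξ a) * (1 - ind (ξ b)) * jumpCoef z a b := by
  unfold jumpCoef swap
  cases ha : ξ a <;> cases hb : ξ b <;> split_ifs <;> simp_all [ind]

theorem sum_jumpCoef_add_eq_zero {z u v : Site d} {X : Finset (Site d)} (hu : z - u ∈ X)
    (hv : z - v ∈ X) : ∑ x ∈ X, jumpCoef z (x + u) (x + v) = 0 := by
  simp [jumpCoef, ← sub_eq_iff_eq_add, hu, hv]

end Exchange

section Generator

variable {d : ℕ} {θ : ℝ} {c : Site d → ℝ} {E T : Finset (Site d)}

theorem gen_add_rates (p q : Site d → ℝ) (E : Finset (Site d)) (f : Config d → ℝ)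
    (ξ : Config d) : gen (fun z => p z + q z) E f ξ = gen p E f ξ + gen q E f ξ := by
  simp only [gen, ← sum_add_distrib]
  exact sum_congr rfl fun _ _ => sum_congr rfl fun _ _ => by ring

theorem gen_map_addLeftEmbedding (x : Site d) (f : Config d → ℝ) (ξ : Config d) :
    gen c (E.map (addLeftEmbedding x)) f ξ = ∑ u ∈ E, ∑ v ∈ E,
      c (v - u) * ind (ξ (x + u)) * (1 - ind (ξ (x + v))) *
        (f (swap (x + u) (x + v) ξ) - f ξ) := by
  simp [gen, add_sub_add_left_eq_sub]

theorem gen_comp_shift (x : Site d) (f : Config d → ℝ) (ξ : Config d) :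
    gen c E f (shift x ξ) =
      gen c (E.map (addLeftEmbedding x)) (fun ζ => f (shift x ζ)) ξ := by
  rw [gen_map_addLeftEmbedding]
  simp only [gen, shift, swap_shift]

theorem expect_mul_gen (hc : ∀ z, c (-z) = c z) (hET : E ⊆ T) (h G : Config d → ℝ) :
    expect θ T (fun ξ => h ξ * gen c E G ξ) = expect θ T (fun ξ => gen c E h ξ * G ξ) := by
  let A a b := expect θ T (fun ξ => h (swap a b ξ) * (ind (ξ a) * (1 - ind (ξ b))) * G ξ)
  let B a b := expect θ T (fun ξ => h ξ * (ind (ξ a) * (1 - ind (ξ b))) * G ξ)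
  have hswap : ∀ a ∈ E, ∀ b ∈ E,
      expect θ T (fun ξ => h ξ * (ind (ξ a) * (1 - ind (ξ b))) * G (swap a b ξ)) = A b a :=
    fun a ha b hb => by
      rw [← expect_comp_swap (hET ha) (hET hb)]
      simp only [swap_swap, swap_apply_left, swap_apply_right, swap_comm a b]
      rfl
  have hlhs : expect θ T (fun ξ => h ξ * gen c E G ξ) =
      ∑ a ∈ E, ∑ b ∈ E, c (b - a) * (A b a - B a b) := by
    have hpt : ∀ ξ, h ξ * gen c E G ξ = ∑ a ∈ E, ∑ b ∈ E, c (b - a) *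
        (h ξ * (ind (ξ a) * (1 - ind (ξ b))) * G (swap a b ξ) -
          h ξ * (ind (ξ a) * (1 - ind (ξ b))) * G ξ) := fun ξ => by
      simp only [gen, mul_sum]
      exact sum_congr rfl fun _ _ => sum_congr rfl fun _ _ => by ring
    simp_rw [hpt, expect_sum, expect_const_mul, expect_sub]
    exact sum_congr rfl fun a ha => sum_congr rfl fun b hb => by rw [hswap a ha b hb]
  have hrhs : expect θ T (fun ξ => gen c E h ξ * G ξ) =
      ∑ a ∈ E, ∑ b ∈ E, c (b - a) * (A a b - B a b) := by
    have hpt : ∀ ξ, gen c E h ξ * G ξ = ∑ a ∈ E, ∑ b ∈ E, c (b - a) *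
        (h (swap a b ξ) * (ind (ξ a) * (1 - ind (ξ b))) * G ξ -
          h ξ * (ind (ξ a) * (1 - ind (ξ b))) * G ξ) := fun ξ => by
      simp only [gen, sum_mul]
      exact sum_congr rfl fun _ _ => sum_congr rfl fun _ _ => by ring
    simp_rw [hpt, expect_sum, expect_const_mul, expect_sub]
    rfl
  rw [hlhs, hrhs]
  simp only [mul_sub, sum_sub_distrib]
  rw [sum_comm (f := fun a b => c (b - a) * A b a)]
  congr 1
  exact sum_congr rfl fun a _ => sum_congr rfl fun b _ => by rw [← hc, neg_sub]

theorem expect_gen_ind_sub_mul_comp_shift {x z₀ z₁ : Site d} {g : Config d → ℝ}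
    (hg : IsLocal g E) (hET : ∀ y ∈ E, x + y ∈ T) :
    expect θ T (fun ξ => gen c (E.map (addLeftEmbedding x))
        (fun ζ => ind (ζ z₀) - ind (ζ z₁)) ξ * g (shift x ξ)) =
      ∑ u ∈ E, ∑ v ∈ E, c (v - u) * expect θ E (fun ζ => ind (ζ u) * (1 - ind (ζ v)) * g ζ) *
        (jumpCoef z₀ (x + u) (x + v) - jumpCoef z₁ (x + u) (x + v)) := by
  have hpt : ∀ ξ, gen c (E.map (addLeftEmbedding x)) (fun ζ => ind (ζ z₀) - ind (ζ z₁)) ξ *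
      g (shift x ξ) = ∑ u ∈ E, ∑ v ∈ E, c (v - u) *
        (jumpCoef z₀ (x + u) (x + v) - jumpCoef z₁ (x + u) (x + v)) *
          (ind (shift x ξ u) * (1 - ind (shift x ξ v)) * g (shift x ξ)) := fun ξ => by
    rw [gen_map_addLeftEmbedding, sum_mul]
    refine sum_congr rfl fun u _ => ?_
    rw [sum_mul]
    refine sum_congr rfl fun v _ => ?_
    have h₀ := mul_ind_swap_sub (x + u) (x + v) z₀ ξ
    have h₁ := mul_ind_swap_sub (x + u) (x + v) z₁ ξ
    simp only [shift]
    linear_combination (c (v - u) * g (shift x ξ)) * (h₀ - h₁)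
  simp_rw [hpt, expect_sum]
  refine sum_congr rfl fun u hu => sum_congr rfl fun v hv => ?_
  have hK : IsLocal (fun ζ => ind (ζ u) * (1 - ind (ζ v)) * g ζ) E :=
    fun ζ η h => by simp only [h u hu, h v hv, hg ζ η h]
  rw [expect_const_mul, expect_comp_shift (f := fun ζ => ind (ζ u) * (1 - ind (ζ v)) * g ζ) hK hET,
    mul_right_comm]

end Generator

/-- `X` collects the finitely many `x` with a nonvanishing summand, and the expectations are
computed on a set `T` large enough to contain the support of every summand. -/
theorem stmt15_general {d : ℕ} (ρ : ℝ)
    (p : Site d → ℝ)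
    (g : Config d → ℝ) (Sg E : Finset (Site d)) (hg : IsLocal g Sg) (hSgE : Sg ⊆ E)
    (k : Fin d) (X T : Finset (Site d))
    (hXT : ∀ x ∈ X, ∀ y ∈ E, x + y ∈ T)
    (hX : ∀ x : Site d, x ∉ X →
      Disjoint ({(0 : Site d), Pi.single k 1} : Finset (Site d))
        (E.image (fun y => x + y))) :
    ∑ x ∈ X, expect ρ T (fun ξ =>
        (ind (ξ 0) - ind (ξ (Pi.single k 1))) *
          (gen p E g (shift x ξ) + gen (fun z => p (-z)) E g (shift x ξ))) = 0 := by
  set e : Site d := Pi.single k 1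
  set c : Site d → ℝ := fun z => p z + p (-z)
  have hc : ∀ z, c (-z) = c z := fun z => by simp [c, add_comm]
  have hreach : ∀ z ∈ ({0, e} : Finset (Site d)), ∀ u ∈ E, z - u ∈ X := fun z hz u hu => by
    by_contra h
    exact disjoint_left.mp (hX _ h) hz (mem_image.mpr ⟨u, hu, sub_add_cancel z u⟩)
  have hterm : ∀ x ∈ X, expect ρ T (fun ξ => (ind (ξ 0) - ind (ξ e)) *
      (gen p E g (shift x ξ) + gen (fun z => p (-z)) E g (shift x ξ))) =
        ∑ u ∈ E, ∑ v ∈ E, c (v - u) *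
          expect ρ E (fun ζ => ind (ζ u) * (1 - ind (ζ v)) * g ζ) *
            (jumpCoef 0 (x + u) (x + v) - jumpCoef e (x + u) (x + v)) := fun x hx => by
    simp_rw [← gen_add_rates, gen_comp_shift]
    rw [expect_mul_gen hc (map_addLeftEmbedding_subset (hXT x hx))]
    exact expect_gen_ind_sub_mul_comp_shift (hg.mono hSgE) (hXT x hx)
  rw [sum_congr rfl hterm, sum_comm]
  refine sum_eq_zero fun u hu => ?_
  rw [sum_comm]
  refine sum_eq_zero fun v hv => ?_
  have h0 : (0 : Site d) ∈ ({0, e} : Finset (Site d)) := mem_insert_self _ _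
  have he : e ∈ ({0, e} : Finset (Site d)) := mem_insert_of_mem (mem_singleton_self _)
  rw [← mul_sum, sum_sub_distrib,
    sum_jumpCoef_add_eq_zero (hreach 0 h0 u hu) (hreach 0 h0 v hv),
    sum_jumpCoef_add_eq_zero (hreach e he u hu) (hreach e he v hv), sub_self, mul_zero]

/-- `⟨∇_{e_k}ξ(0), (L + L*)g⟩_{ρ,0} = 0`, i.e.
`Σ_x ⟨(ξ(0)-ξ(e_k)) · τ_x(L+L*)g⟩_ρ = 0`; `X` collects the finitely many sites with
nonvanishing summand, the expectations being computed on a large enough set `T`. -/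
theorem stmt15 {d : ℕ} (ρ : ℝ) (hρ : ρ ∈ Set.Icc (0:ℝ) 1)
    (p : Site d → ℝ) (P : Finset (Site d))
    (hp0 : p 0 = 0) (hpnn : ∀ z, 0 ≤ p z) (hsum : ∑ z ∈ P, p z = 1)
    (hsupp : ∀ z ∉ P, p z = 0)
    (g : Config d → ℝ) (Sg E : Finset (Site d)) (hg : IsLocal g Sg) (hSgE : Sg ⊆ E)
    (hclosed : ∀ x ∈ Sg, ∀ z ∈ P, x + z ∈ E ∧ x - z ∈ E)
    (k : Fin d) (X T : Finset (Site d))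
    (hXT : ∀ x ∈ X, ∀ y ∈ E, x + y ∈ T)
    (h0T : (0 : Site d) ∈ T) (hekT : (Pi.single k 1 : Site d) ∈ T)
    (hX : ∀ x : Site d, x ∉ X →
      Disjoint ({(0 : Site d), Pi.single k 1} : Finset (Site d))
        (E.image (fun y => x + y))) :
    ∑ x ∈ X, expect ρ T (fun ξ =>
        (ind (ξ 0) - ind (ξ (Pi.single k 1))) *
          (gen p E g (shift x ξ) + gen (fun z => p (-z)) E g (shift x ξ))) = 0 :=
  stmt15_general ρ p g Sg E hg hSgE k X T hXT hX
end
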